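/- Let G = (V,E) be a complete graph with |V| ≥ 3 whose edge costs c satisfy the triangle inequality. Given any 2-edge-connected spanning multi-subgraph F of G (a multiset of edges of E), there exists a 2-edge-connected spanning subgraph F' of G using each edge at most once with c(F') ≤ c(F). -/

import Mathlib

open Finset

attribute [local instance] Classical.propDecidable

/-- An (unordered) edge `e` crosses the vertex set `S`. -/
def crosses {V : Type*} (e : Sym2 V) (S : Finset V) : Prop :=
  ∃ a b : V, e = s(a, b) ∧ a ∈ S ∧ b ∉ S

/-- A multiset of edges (given by multiplicities `m`) is 2-edge-connected. -/
def TwoEC {V : Type*} [Fintype V] (m : Sym2 V → ℕ) : Prop :=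
  ∀ S : Finset V, S.Nonempty → S ≠ Finset.univ →
    2 ≤ ∑ e ∈ Finset.univ.filter (fun e => crosses e S), m e

/-!
Induct on the total multiplicity. If some edge `e₀` is used at least twice, drop one copy. If
the result is no longer 2-edge-connected, some cut `S` is crossed only by the two copies of
`e₀ = xy`; as `|V| ≥ 3` we may take `x` on a side with at least two vertices, and the cut
`S \ {x}` yields an edge `xw` inside `S`. Splitting off (replacing `xy` and `xw` by `yw`) does not
increase the cost by the triangle inequality. It only loses crossings of cuts `T` separating `x`
from `y` and `w`, and such a `T` is crossed by both copies of `xy` and by the at least two edges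
leaving `S \ T`.
-/

section

variable {V : Type*}

theorem crosses_mk_iff {a b : V} {S : Finset V} :
    crosses s(a, b) S ↔ (a ∈ S ∧ b ∉ S) ∨ (b ∈ S ∧ a ∉ S) := by
  constructor
  · rintro ⟨x, y, hxy, hx, hy⟩
    rcases Sym2.eq_iff.1 hxy with ⟨rfl, rfl⟩ | ⟨rfl, rfl⟩
    exacts [Or.inl ⟨hx, hy⟩, Or.inr ⟨hx, hy⟩]
  · rintro (⟨ha, hb⟩ | ⟨hb, ha⟩)
    exacts [⟨a, b, rfl, ha, hb⟩, ⟨b, a, Sym2.eq_swap, hb, ha⟩]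

def LoopFree (m : Sym2 V → ℕ) : Prop :=
  ∀ e : Sym2 V, e.IsDiag → m e = 0

theorem LoopFree.of_le {m n : Sym2 V → ℕ} (hm : LoopFree m) (h : n ≤ m) : LoopFree n :=
  fun e he => Nat.eq_zero_of_le_zero (hm e he ▸ h e)

noncomputable def singleEdge (e : Sym2 V) : Sym2 V → ℕ := Pi.single e 1

theorem exists_eq_add_singleEdge {m : Sym2 V → ℕ} {e : Sym2 V} (h : m e ≠ 0) :
    ∃ n, m = n + singleEdge e :=
  ⟨m - singleEdge e, by ext f; by_cases hf : f = e <;> simp [singleEdge, hf]; omega⟩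

theorem singleEdge_le_one (e f : Sym2 V) : singleEdge e f ≤ 1 := by
  by_cases h : f = e <;> simp [singleEdge, h]

variable [Fintype V]

theorem crosses_compl_iff {e : Sym2 V} {S : Finset V} : crosses e Sᶜ ↔ crosses e S := by
  induction e using Sym2.ind with
  | _ a b => simp only [crosses_mk_iff, mem_compl]; tauto

noncomputable def cutValue (m : Sym2 V → ℕ) (S : Finset V) : ℕ :=
  ∑ e ∈ univ.filter (fun e => crosses e S), m e

noncomputable def cost (c : Sym2 V → ℝ) (m : Sym2 V → ℕ) : ℝ :=
  ∑ e, (m e : ℝ) * c e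

variable {m n : Sym2 V → ℕ} {S T : Finset V}

theorem cutValue_compl (m : Sym2 V → ℕ) (S : Finset V) : cutValue m Sᶜ = cutValue m S := by
  simp only [cutValue, crosses_compl_iff]

theorem cutValue_add (m n : Sym2 V → ℕ) (S : Finset V) :
    cutValue (m + n) S = cutValue m S + cutValue n S :=
  sum_add_distrib

theorem cutValue_singleEdge (e : Sym2 V) (S : Finset V) :
    cutValue (singleEdge e) S = if crosses e S then 1 else 0 := by
  simp [cutValue, singleEdge, sum_pi_single']

theorem cost_add (c : Sym2 V → ℝ) (m n : Sym2 V → ℕ) : cost c (m + n) = cost c m + cost c n := by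
  simp only [cost, Pi.add_apply, Nat.cast_add, add_mul, sum_add_distrib]

theorem cost_singleEdge (c : Sym2 V → ℝ) (e : Sym2 V) : cost c (singleEdge e) = c e := by
  simp [cost, singleEdge, Pi.single_apply]

theorem sum_add_singleEdge (m : Sym2 V → ℕ) (e : Sym2 V) :
    ∑ f, (m + singleEdge e) f = ∑ f, m f + 1 := by
  simp [singleEdge, sum_add_distrib, sum_pi_single']

theorem exists_crosses_of_cutValue_ne_zero (h : cutValue m S ≠ 0) :
    ∃ e, crosses e S ∧ m e ≠ 0 := by
  obtain ⟨e, he, hme⟩ := exists_ne_zero_of_sum_ne_zero h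
  exact ⟨e, (mem_filter.1 he).2, hme⟩

theorem eq_zero_of_cutValue_le {e₀ e : Sym2 V} (he₀ : crosses e₀ S) (he : crosses e S)
    (hne : e ≠ e₀) (h : cutValue m S ≤ m e₀) : m e = 0 := by
  have : m e₀ + m e ≤ cutValue m S := by
    rw [← sum_pair (Ne.symm hne)]
    exact sum_le_sum_of_subset (by simp [insert_subset_iff, he₀, he])
  omega

theorem add_cutValue_le_cutValue {e₀ : Sym2 V}
    (hST : ∀ e, crosses e S → m e ≠ 0 → crosses e T ∧ e ≠ e₀) (he₀ : crosses e₀ T) :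
    m e₀ + cutValue m S ≤ cutValue m T := by
  have hnot : e₀ ∉ univ.filter (fun e => crosses e S ∧ m e ≠ 0) := by
    simp only [mem_filter, mem_univ, true_and]
    exact fun h => (hST e₀ h.1 h.2).2 rfl
  calc m e₀ + cutValue m S
      = ∑ e ∈ insert e₀ (univ.filter (fun e => crosses e S ∧ m e ≠ 0)), m e := by
        rw [sum_insert hnot, cutValue, ← sum_filter_ne_zero, filter_filter]
    _ ≤ cutValue m T := by
        refine sum_le_sum_of_subset (insert_subset_iff.2 ⟨by simp [he₀], fun e he => ?_⟩)
        simp only [mem_filter, mem_univ, true_and] at he ⊢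
        exact (hST e he.1 he.2).1

section TightCut

variable {x y w : V} (hx : x ∈ S) (hy : y ∉ S)
  (hS : ∀ e, crosses e S → e ≠ s(x, y) → m e = 0)
include hx hy hS

theorem four_le_cutValue (hm : TwoEC m) (hxy : 2 ≤ m s(x, y)) (hw : w ∈ S)
    (hxT : x ∈ T) (hyT : y ∉ T) (hwT : w ∉ T) : 4 ≤ cutValue m T := by
  have hST : 2 ≤ cutValue m (S \ T) :=
    hm _ ⟨w, mem_sdiff.2 ⟨hw, hwT⟩⟩ fun h => (mem_sdiff.1 (h ▸ mem_univ x)).2 hxT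
  have hle := add_cutValue_le_cutValue (m := m) (S := S \ T) (T := T) (e₀ := s(x, y)) ?_
    (crosses_mk_iff.2 (Or.inl ⟨hxT, hyT⟩))
  · omega
  rintro _ ⟨a, b, rfl, ha, hb⟩ hab
  obtain ⟨haS, haT⟩ := mem_sdiff.1 ha
  have hne : s(a, b) ≠ s(x, y) := by
    rintro h
    rcases Sym2.eq_iff.1 h with ⟨rfl, -⟩ | ⟨rfl, -⟩
    exacts [haT hxT, hy haS]
  have hbS : b ∈ S := by_contra fun hbS => hab (hS _ ⟨a, b, rfl, haS, hbS⟩ hne)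
  have hbT : b ∈ T := by_contra fun hbT => hb (mem_sdiff.2 ⟨hbS, hbT⟩)
  exact ⟨crosses_mk_iff.2 (Or.inr ⟨hbT, haT⟩), hne⟩

theorem exists_neighbor_mem (hm : TwoEC m) (hSx : (S.erase x).Nonempty) :
    ∃ w ∈ S, w ≠ x ∧ m s(x, w) ≠ 0 := by
  have h2 : 2 ≤ cutValue m (S.erase x) :=
    hm _ hSx fun h => notMem_erase x S (h ▸ mem_univ x)
  obtain ⟨_, ⟨a, b, rfl, ha, hb⟩, hab⟩ := exists_crosses_of_cutValue_ne_zero (m := m)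
    (S := S.erase x) (by omega)
  obtain ⟨hax, haS⟩ := mem_erase.1 ha
  have hbS : b ∈ S := by_contra fun hbS => hab <| hS _ ⟨a, b, rfl, haS, hbS⟩ <| by
    rintro h
    rcases Sym2.eq_iff.1 h with ⟨rfl, -⟩ | ⟨rfl, -⟩
    exacts [hax rfl, hy haS]
  obtain rfl : b = x := by_contra fun hbx => hb (mem_erase.2 ⟨hbx, hbS⟩)
  exact ⟨a, haS, hax, by rwa [Sym2.eq_swap]⟩

theorem twoEC_splitOff {n : Sym2 V → ℕ} (hm : TwoEC m) (hxy : 2 ≤ m s(x, y)) (hw : w ∈ S)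
    (hmn : m = n + singleEdge s(x, y) + singleEdge s(x, w)) :
    TwoEC (n + singleEdge s(y, w)) := by
  intro T hT hTu
  change 2 ≤ cutValue (n + singleEdge s(y, w)) T
  have hmT : cutValue m T = cutValue n T + (if crosses s(x, y) T then 1 else 0) +
      (if crosses s(x, w) T then 1 else 0) := by
    rw [hmn, cutValue_add, cutValue_add, cutValue_singleEdge, cutValue_singleEdge]
  rw [cutValue_add, cutValue_singleEdge]
  have h2 : 2 ≤ cutValue m T := hm T hT hTu
  -- splitting off loses two crossings exactly when `T` separates `x` from both `y` and `w`
  obtain hsep | hsep | hle : (x ∈ T ∧ y ∉ T ∧ w ∉ T) ∨ (x ∉ T ∧ y ∈ T ∧ w ∈ T) ∨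
      (if crosses s(x, y) T then 1 else 0) + (if crosses s(x, w) T then 1 else 0) ≤
        (if crosses s(y, w) T then 1 else 0 : ℕ) := by
    simp only [crosses_mk_iff]
    by_cases x ∈ T <;> by_cases y ∈ T <;> by_cases w ∈ T <;> simp [*]
  · have h4 := four_le_cutValue hx hy hS hm hxy hw hsep.1 hsep.2.1 hsep.2.2
    split_ifs at hmT ⊢ <;> omega
  · have h4 := four_le_cutValue hx hy hS hm hxy hw (T := Tᶜ) (by simpa using hsep.1)
      (by simpa using hsep.2.1) (by simpa using hsep.2.2)
    rw [cutValue_compl] at h4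
    split_ifs at hmT ⊢ <;> omega
  · omega

theorem exists_splitOff (c : Sym2 V → ℝ) (htri : ∀ u v w : V, c s(u, w) ≤ c s(u, v) + c s(v, w))
    (hm : TwoEC m) (hl : LoopFree m) (hxy : 2 ≤ m s(x, y)) (hSx : (S.erase x).Nonempty) :
    ∃ n, TwoEC n ∧ LoopFree n ∧ ∑ e, n e < ∑ e, m e ∧ cost c n ≤ cost c m := by
  obtain ⟨w, hw, hwx, hxw⟩ := exists_neighbor_mem hx hy hS hm hSx
  have hyw : y ≠ w := fun h => hy (h ▸ hw)
  obtain ⟨m₁, rfl⟩ := exists_eq_add_singleEdge hxw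
  obtain ⟨n, rfl⟩ := exists_eq_add_singleEdge (m := m₁) (e := s(x, y)) (by
    have : 2 ≤ m₁ s(x, y) + singleEdge s(x, w) s(x, y) := hxy
    have := singleEdge_le_one s(x, w) s(x, y)
    omega)
  refine ⟨n + singleEdge s(y, w), twoEC_splitOff hx hy hS hm hxy hw rfl, ?_, ?_, ?_⟩
  · have hn : LoopFree n := hl.of_le fun e => by simp only [Pi.add_apply]; omega
    intro e he
    have : e ≠ s(y, w) := fun h => hyw (Sym2.mk_isDiag_iff.1 (h ▸ he))
    simp [singleEdge, hn e he, this]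
  · simp only [sum_add_singleEdge]
    omega
  · have := htri y x w
    rw [Sym2.eq_swap (a := y) (b := x)] at this
    simp only [cost_add, cost_singleEdge]
    linarith

end TightCut

theorem erase_nonempty_or_compl_erase_nonempty (h3 : 3 ≤ Fintype.card V) (a b : V)
    (S : Finset V) : (S.erase a).Nonempty ∨ (Sᶜ.erase b).Nonempty := by
  simp only [← card_pos]
  have := card_add_card_compl S
  have := pred_card_le_card_erase (a := a) (s := S)
  have := pred_card_le_card_erase (a := b) (s := Sᶜ)
  omega

theorem exists_reduction (h3 : 3 ≤ Fintype.card V) (c : Sym2 V → ℝ) (hc0 : ∀ e, 0 ≤ c e)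
    (htri : ∀ u v w : V, c s(u, w) ≤ c s(u, v) + c s(v, w))
    (hm : TwoEC m) (hl : LoopFree m) {e₀ : Sym2 V} (he₀ : 2 ≤ m e₀) :
    ∃ n, TwoEC n ∧ LoopFree n ∧ ∑ e, n e < ∑ e, m e ∧ cost c n ≤ cost c m := by
  obtain ⟨n, rfl⟩ := exists_eq_add_singleEdge (m := m) (e := e₀) (by omega)
  by_cases hn : TwoEC n
  · refine ⟨n, hn, hl.of_le fun e => Nat.le_add_right _ _, ?_, ?_⟩
    · rw [sum_add_singleEdge]
      omega
    · rw [cost_add, cost_singleEdge]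
      linarith [hc0 e₀]
  obtain ⟨S, hS, hSu, hnS⟩ : ∃ S : Finset V, S.Nonempty ∧ S ≠ univ ∧ cutValue n S < 2 := by
    simpa only [TwoEC, cutValue, not_forall, not_le, exists_prop] using hn
  have h2 : 2 ≤ cutValue (n + singleEdge e₀) S := hm S hS hSu
  rw [cutValue_add, cutValue_singleEdge] at h2
  have hcross : crosses e₀ S := by
    by_contra h
    rw [if_neg h] at h2
    omega
  have honly : ∀ e, crosses e S → e ≠ e₀ → (n + singleEdge e₀) e = 0 :=
    fun e he hne => eq_zero_of_cutValue_le hcross he hne <| by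
      rw [cutValue_add, cutValue_singleEdge, if_pos hcross]
      omega
  obtain ⟨a, b, rfl, ha, hb⟩ := hcross
  rcases erase_nonempty_or_compl_erase_nonempty h3 a b S with hSa | hSb
  · exact exists_splitOff ha hb honly c htri hm hl he₀ hSa
  · rw [Sym2.eq_swap] at honly he₀ hm hl ⊢
    exact exists_splitOff (mem_compl.2 hb) (notMem_compl.2 ha)
      (fun e he => honly e (crosses_compl_iff.1 he)) c htri hm hl he₀ hSb

end

theorem stmt5_general {V : Type*} [Fintype V] (h3 : 3 ≤ Fintype.card V)
    (c : Sym2 V → ℝ) (hc0 : ∀ e, 0 ≤ c e)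
    (htri : ∀ u v w : V, c s(u, w) ≤ c s(u, v) + c s(v, w))
    (F : Sym2 V → ℕ) (hFloop : ∀ e : Sym2 V, e.IsDiag → F e = 0)
    (hF : TwoEC F) :
    ∃ F' : Sym2 V → ℕ, (∀ e, F' e ≤ 1) ∧ (∀ e : Sym2 V, e.IsDiag → F' e = 0) ∧ TwoEC F' ∧
      ∑ e : Sym2 V, (F' e : ℝ) * c e ≤ ∑ e : Sym2 V, (F e : ℝ) * c e := by
  induction hN : ∑ e, F e using Nat.strong_induction_on generalizing F with
  | _ N ih =>
    by_cases hsimple : ∀ e, F e ≤ 1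
    · exact ⟨F, hsimple, hFloop, hF, le_rfl⟩
    push Not at hsimple
    obtain ⟨e₀, he₀⟩ := hsimple
    obtain ⟨G, hG, hGloop, hGsum, hGcost⟩ := exists_reduction h3 c hc0 htri hF hFloop he₀
    obtain ⟨F', hF'1, hF'loop, hF', hF'cost⟩ := ih _ (hN ▸ hGsum) G hGloop hG rfl
    exact ⟨F', hF'1, hF'loop, hF', hF'cost.trans hGcost⟩

/-- In a complete metric graph on at least 3 vertices, any 2-edge-connected spanning
multi-subgraph can be turned into a 2-edge-connected spanning (simple) subgraph of no
greater cost. -/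
theorem stmt5 {V : Type*} [Fintype V] [DecidableEq V] (h3 : 3 ≤ Fintype.card V)
    (c : Sym2 V → ℝ) (hc0 : ∀ e, 0 ≤ c e)
    (htri : ∀ u v w : V, c s(u, w) ≤ c s(u, v) + c s(v, w))
    (F : Sym2 V → ℕ) (hFloop : ∀ e : Sym2 V, e.IsDiag → F e = 0)
    (hF : TwoEC F) :
    ∃ F' : Sym2 V → ℕ, (∀ e, F' e ≤ 1) ∧ (∀ e : Sym2 V, e.IsDiag → F' e = 0) ∧ TwoEC F' ∧
      ∑ e : Sym2 V, (F' e : ℝ) * c e ≤ ∑ e : Sym2 V, (F e : ℝ) * c e :=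
  stmt5_general h3 c hc0 htri F hFloop hF
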